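/- arXiv:2110.03449 — 2 statements merged into one kernel-verified Lean document; each statement's English description precedes it below -/
import Mathlib

section
/- Let D be a bounded domain in ℝ^m, m ≥ 2, and let u : closure(D) → ℝ be continuous on the closure of D and twice continuously differentiable in D. Suppose there is r* > 0 with D_{r*} ≠ ∅ such that for every r ∈ (0, r*) the spherical mean M(·, r, u) is harmonic in D_r. Then u is harmonic in D. -/
open MeasureTheory Metric

/-- The spherical mean `M(x, r, u) = (1/ω_m) ∫_{S_1(0)} u(x + r y) dS_y`,
realized as the average of `y ↦ u (x + r • y)` over the unit sphere with respect to
the `(m-1)`-dimensional Hausdorff (surface-area) measure. -/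
noncomputable def sphereMean (m : ℕ) (u : EuclideanSpace ℝ (Fin m) → ℝ)
    (x : EuclideanSpace ℝ (Fin m)) (r : ℝ) : ℝ :=
  ⨍ y in sphere (0 : EuclideanSpace ℝ (Fin m)) 1, u (x + r • y) ∂μH[(m : ℝ) - 1]

/-- The iterated spherical mean
`I(x, r', r, u) = (1/ω_m²) ∫_{S_1(0)} ∫_{S_1(0)} u(x + r' y + r z) dS_z dS_y`. -/
noncomputable def iterSphereMean (m : ℕ) (u : EuclideanSpace ℝ (Fin m) → ℝ)
    (x : EuclideanSpace ℝ (Fin m)) (r' r : ℝ) : ℝ :=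
  ⨍ y in sphere (0 : EuclideanSpace ℝ (Fin m)) 1,
    ⨍ z in sphere (0 : EuclideanSpace ℝ (Fin m)) 1,
      u (x + r' • y + r • z) ∂μH[(m : ℝ) - 1] ∂μH[(m : ℝ) - 1]

/-- The Laplacian `∇²u (x) = ∑ i ∂²u/∂x_i² (x)`. -/
noncomputable def laplacian (m : ℕ) (u : EuclideanSpace ℝ (Fin m) → ℝ)
    (x : EuclideanSpace ℝ (Fin m)) : ℝ :=
  ∑ i : Fin m, fderiv ℝ (fun y => fderiv ℝ u y (EuclideanSpace.single i 1)) x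
    (EuclideanSpace.single i 1)

open Filter Topology
open scoped ENNReal

/-! Differentiating under the integral sign shows that the Laplacian commutes with spherical
means: `∇² M(·, r, u) = M(·, r, ∇²u)` on `D_r`. Hence for `x ∈ D` the spherical means of
`∇²u` about `x` vanish for all small `r > 0`, and they tend to `∇²u(x)` as `r → 0` because
`∇²u` is continuous.

The spherical means are honest averages because the unit sphere of `ℝ^(n+1)` has finite
positive `μH[n]`-measure: it is covered by the radial projections of the `2(n+1)` faces of the
cube `[-1, 1]^(n+1)`, and its projection to the first `n` coordinates contains a neighbourhood
of `0`. -/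

theorem lipschitzOnWith_normalize {V : Type*} [NormedAddCommGroup V] [NormedSpace ℝ V] :
    LipschitzOnWith 2 (NormedSpace.normalize : V → V) {x | 1 ≤ ‖x‖} := by
  refine LipschitzOnWith.of_dist_le_mul fun x (hx : 1 ≤ ‖x‖) y (hy : 1 ≤ ‖y‖) => ?_
  have hx0 : 0 < ‖x‖ := one_pos.trans_le hx
  have hy0 : 0 < ‖y‖ := one_pos.trans_le hy
  have hsplit : NormedSpace.normalize x - NormedSpace.normalize y =
      ‖x‖⁻¹ • (x - y) + (‖x‖⁻¹ - ‖y‖⁻¹) • y := by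
    simp only [NormedSpace.normalize, smul_sub, sub_smul]; abel
  have hnorm : |‖y‖ - ‖x‖| ≤ ‖x - y‖ := by
    rw [abs_sub_comm]; exact abs_norm_sub_norm_le x y
  calc dist (NormedSpace.normalize x) (NormedSpace.normalize y)
      ≤ ‖x‖⁻¹ * ‖x - y‖ + |‖x‖⁻¹ - ‖y‖⁻¹| * ‖y‖ := by
        rw [dist_eq_norm, hsplit]
        refine (norm_add_le _ _).trans_eq ?_
        rw [norm_smul, norm_smul, Real.norm_eq_abs, Real.norm_eq_abs, abs_inv, abs_norm]
    _ = ‖x‖⁻¹ * (‖x - y‖ + |‖y‖ - ‖x‖|) := by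
        rw [inv_sub_inv hx0.ne' hy0.ne', abs_div, abs_mul, abs_norm, abs_norm]
        field_simp
    _ ≤ 1 * (‖x - y‖ + ‖x - y‖) := by
        gcongr
        exact inv_le_one_of_one_le₀ hx
    _ = 2 * dist x y := by rw [dist_eq_norm]; ring

theorem lipschitzWith_insertNth {n : ℕ} (i : Fin (n + 1)) (c : ℝ) :
    LipschitzWith 1 (Fin.insertNth (α := fun _ => ℝ) i c) := by
  refine LipschitzWith.of_dist_le_mul fun y z => ?_
  rw [NNReal.coe_one, one_mul, dist_pi_le_iff dist_nonneg]
  intro j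
  cases j using Fin.succAboveCases i with
  | x => simp
  | p j => simpa using dist_le_pi_dist y z j

theorem lipschitzWith_init {n : ℕ} :
    LipschitzWith 1 (Fin.init (α := fun _ : Fin (n + 1) => ℝ)) := by
  refine LipschitzWith.of_dist_le_mul fun y z => ?_
  rw [NNReal.coe_one, one_mul, dist_pi_le_iff dist_nonneg]
  exact fun j => dist_le_pi_dist y z _

theorem sphere_subset_iUnion_normalize_cubeFace (n : ℕ) :
    sphere (0 : EuclideanSpace ℝ (Fin (n + 1))) 1 ⊆
      ⋃ i, ⋃ c ∈ ({-1, 1} : Set ℝ),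
        NormedSpace.normalize '' (WithLp.toLp 2 ∘ Fin.insertNth i c '' Set.Icc (-1) 1) := by
  intro x hx
  have hx1 : ‖x‖ = 1 := mem_sphere_zero_iff_norm.mp hx
  obtain ⟨i, hi⟩ := Finite.exists_max fun j => |x j|
  have ht : 0 < |x i| := by
    by_contra! h
    have : x = 0 := by
      ext j
      exact abs_nonpos_iff.mp ((hi j).trans h)
    simp [this] at hx1
  set w := |x i|⁻¹ • x
  have hwi : |w i| = 1 := by
    simp [w, abs_mul, ht.ne']
  have hw : ∀ j, |w j| ≤ 1 := fun j => by
    simpa [w, abs_mul, inv_mul_le_iff₀ ht] using hi j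
  simp only [Set.mem_iUnion]
  refine ⟨i, w i, ?_, w, ⟨Fin.removeNth i w, ?_, ?_⟩, ?_⟩
  · rcases abs_eq (zero_le_one' ℝ) |>.mp hwi with h | h <;> simp [h]
  · exact ⟨fun j => (abs_le.mp (hw _)).1, fun j => (abs_le.mp (hw _)).2⟩
  · exact congrArg (WithLp.toLp 2) (Fin.insertNth_self_removeNth i _)
  · rw [NormedSpace.normalize_smul_of_pos (inv_pos.mpr ht),
      NormedSpace.normalize_eq_self_of_norm_eq_one hx1]

theorem hausdorffMeasure_pi_fin (n : ℕ) : (μH[n] : Measure (Fin n → ℝ)) = volume := by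
  simpa using hausdorffMeasure_pi_real (ι := Fin n)

theorem hausdorffMeasure_sphere_lt_top (n : ℕ) :
    μH[n] (sphere (0 : EuclideanSpace ℝ (Fin (n + 1))) 1) < ∞ := by
  refine (measure_mono (sphere_subset_iUnion_normalize_cubeFace n)).trans_lt <|
    (measure_iUnion_fintype_le _ _).trans_lt <| ENNReal.sum_lt_top.mpr fun i _ =>
      measure_biUnion_lt_top (Set.toFinite _) fun c hc => ?_
  have hc : |c| = 1 := by rcases hc with rfl | rfl <;> simp
  have hface := (PiLp.lipschitzWith_toLp 2 fun _ : Fin (n + 1) => ℝ).comp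
    (lipschitzWith_insertNth i c)
  have hmaps : Set.MapsTo (WithLp.toLp 2 ∘ Fin.insertNth (α := fun _ => ℝ) i c)
      (Set.Icc (-1) 1) {x | 1 ≤ ‖x‖} := fun y _ => by
    simpa [hc] using
      PiLp.norm_apply_le (WithLp.toLp 2 (Fin.insertNth (α := fun _ => ℝ) i c y)) i
  rw [← Set.image_comp]
  refine ((lipschitzOnWith_normalize.comp hface.lipschitzOnWith hmaps).hausdorffMeasure_image_le
    n.cast_nonneg).trans_lt <|
    ENNReal.mul_lt_top (ENNReal.rpow_lt_top_of_nonneg n.cast_nonneg ENNReal.coe_ne_top) ?_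
  rw [hausdorffMeasure_pi_fin]
  exact isCompact_Icc.measure_lt_top

theorem hausdorffMeasure_sphere_pos (n : ℕ) :
    0 < μH[n] (sphere (0 : EuclideanSpace ℝ (Fin (n + 1))) 1) := by
  set U : Set (Fin n → ℝ) := {y | ∑ j, y j ^ 2 < 1}
  have hU : IsOpen U := isOpen_lt (by fun_prop) continuous_const
  have hU_sub :
      U ⊆ Fin.init ∘ WithLp.ofLp '' sphere (0 : EuclideanSpace ℝ (Fin (n + 1))) 1 := fun y hy => by
    have h : 0 ≤ 1 - ∑ j, y j ^ 2 := sub_nonneg.2 (le_of_lt hy)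
    refine ⟨WithLp.toLp 2 (Fin.snoc y √(1 - ∑ j, y j ^ 2)), ?_, Fin.init_snoc _ _⟩
    rw [mem_sphere_zero_iff_norm, EuclideanSpace.norm_eq, Fin.sum_univ_castSucc]
    simp [Real.sq_sqrt h]
  have hπ := lipschitzWith_init.comp (PiLp.lipschitzWith_ofLp 2 fun _ : Fin (n + 1) => ℝ)
  calc 0 < μH[n] U := by
        rw [hausdorffMeasure_pi_fin]
        exact hU.measure_pos _ ⟨0, by simp [U]⟩
    _ ≤ μH[n] (sphere (0 : EuclideanSpace ℝ (Fin (n + 1))) 1) := by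
        simpa using (measure_mono hU_sub).trans (hπ.hausdorffMeasure_image_le n.cast_nonneg _)

section TranslateAverage

variable {E F : Type*} [NormedAddCommGroup E] [NormedSpace ℝ E] [NormedAddCommGroup F]
  {K Ω : Set E} {r : ℝ} {x : E}

theorem IsCompact.eventually_nhds_prod_forall_add_smul_mem (hK : IsCompact K) (hΩ : IsOpen Ω)
    (hx : ∀ y ∈ K, x + r • y ∈ Ω) : ∀ᶠ p : E × ℝ in 𝓝 (x, r), ∀ y ∈ K, p.1 + p.2 • y ∈ Ω :=
  hK.eventually_forall_of_forall_eventually fun y hy =>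
    ((by fun_prop : Continuous fun q : (E × ℝ) × E => q.1.1 + q.1.2 • q.2).tendsto _).eventually
      (hΩ.mem_nhds (hx y hy))

theorem IsCompact.eventually_nhds_forall_add_smul_mem (hK : IsCompact K) (hΩ : IsOpen Ω)
    (hx : ∀ y ∈ K, x + r • y ∈ Ω) : ∀ᶠ z in 𝓝 x, ∀ y ∈ K, z + r • y ∈ Ω :=
  ((continuous_id.prodMk continuous_const).tendsto x).eventually
    (hK.eventually_nhds_prod_forall_add_smul_mem hΩ hx)

variable [MeasurableSpace E] [BorelSpace E] {μ : Measure E}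

theorem ContinuousOn.integrableOn_comp_add_smul {g : E → F} (hg : ContinuousOn g Ω)
    (hK : IsCompact K) (hμK : μ K ≠ ∞) (hx : ∀ y ∈ K, x + r • y ∈ Ω) :
    IntegrableOn (fun y => g (x + r • y)) K μ :=
  (hg.comp (by fun_prop) hx).integrableOn_of_subset_isCompact hK hK.measurableSet
    subset_rfl hμK

variable [NormedSpace ℝ F]

theorem hasFDerivAt_setIntegral_comp_add_smul {f : E → F} {f' : E → E →L[ℝ] F}
    (hK : IsCompact K) (hμK : μ K ≠ ∞) (hΩ : IsOpen Ω)
    (hf : ∀ w ∈ Ω, HasFDerivAt f (f' w) w) (hf' : ContinuousOn f' Ω)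
    (hx : ∀ y ∈ K, x + r • y ∈ Ω) :
    HasFDerivAt (fun z => ∫ y in K, f (z + r • y) ∂μ) (∫ y in K, f' (x + r • y) ∂μ) x := by
  have hfc : ContinuousOn f Ω := fun w hw => (hf w hw).continuousAt.continuousWithinAt
  obtain ⟨M, hM⟩ := (hK.image (by fun_prop : Continuous fun y => x + r • y)
    ).exists_bound_of_continuousOn (hf'.mono (Set.image_subset_iff.2 hx))
  -- shrinking `Ω` to where `‖f'‖ < M + 1` gives a uniform bound near `x`
  set Ω' := Ω ∩ f' ⁻¹' ball 0 (M + 1)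
  have hxΩ' : ∀ y ∈ K, x + r • y ∈ Ω' := fun y hy =>
    ⟨hx y hy, mem_ball_zero_iff.2 ((hM _ ⟨y, hy, rfl⟩).trans_lt (lt_add_one M))⟩
  have hs :=
    hK.eventually_nhds_forall_add_smul_mem (hf'.isOpen_inter_preimage hΩ isOpen_ball) hxΩ'
  have := isFiniteMeasure_restrict.2 hμK
  refine hasFDerivAt_integral_of_dominated_of_fderiv_le (F' := fun z y => f' (z + r • y))
    (bound := fun _ => M + 1) hs
    (hs.mono fun z hz => (hfc.integrableOn_comp_add_smul hK hμK fun y hy => (hz y hy).1).1)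
    (hfc.integrableOn_comp_add_smul hK hμK hx)
    (hf'.integrableOn_comp_add_smul hK hμK hx).1 ?_ (integrable_const _) ?_
  · exact ae_restrict_of_forall_mem hK.measurableSet fun y hy z hz =>
      (mem_ball_zero_iff.1 (hz y hy).2).le
  · exact ae_restrict_of_forall_mem hK.measurableSet fun y hy z hz =>
      (hasFDerivAt_comp_add_right _).2 (hf _ (hz y hy).1)

theorem hasFDerivAt_setAverage_comp_add_smul {f : E → F} {f' : E → E →L[ℝ] F}
    (hK : IsCompact K) (hμK : μ K ≠ ∞) (hΩ : IsOpen Ω)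
    (hf : ∀ w ∈ Ω, HasFDerivAt f (f' w) w) (hf' : ContinuousOn f' Ω)
    (hx : ∀ y ∈ K, x + r • y ∈ Ω) :
    HasFDerivAt (fun z => ⨍ y in K, f (z + r • y) ∂μ) (⨍ y in K, f' (x + r • y) ∂μ) x := by
  simp only [setAverage_eq]
  exact (hasFDerivAt_setIntegral_comp_add_smul hK hμK hΩ hf hf' hx).const_smul _

theorem tendsto_setAverage_comp_add_smul [CompleteSpace F] {g : E → F} (hg : ContinuousOn g Ω)
    (hΩ : IsOpen Ω) (hxΩ : x ∈ Ω) (hK : IsCompact K) (hμ₀ : μ K ≠ 0) (hμK : μ K ≠ ∞) :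
    Tendsto (fun r : ℝ => ⨍ y in K, g (x + r • y) ∂μ) (𝓝 0) (𝓝 (g x)) := by
  refine Metric.tendsto_nhds.2 fun ε hε => ?_
  have hU := hg.isOpen_inter_preimage hΩ (isOpen_ball (x := g x) (ε := ε / 2))
  have h0 : ∀ y ∈ K, x + (0 : ℝ) • y ∈ Ω ∩ g ⁻¹' ball (g x) (ε / 2) := fun y _ => by
    simpa [hxΩ] using half_pos hε
  refine ((continuous_const.prodMk continuous_id).tendsto 0 |>.eventually
    (hK.eventually_nhds_prod_forall_add_smul_mem hU h0)).mono fun r hr => ?_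
  have hmem := (convex_ball (g x) (ε / 2)).set_average_mem_closure hμ₀ hμK
    (ae_restrict_of_forall_mem hK.measurableSet fun y hy => (hr y hy).2)
    (hg.integrableOn_comp_add_smul hK hμK fun y hy => (hr y hy).1)
  rw [closure_ball _ (half_pos hε).ne', mem_closedBall] at hmem
  exact hmem.trans_lt (half_lt_self hε)

end TranslateAverage

section Laplacian

variable {m : ℕ}

noncomputable def hessianTrace (m : ℕ) :
    (EuclideanSpace ℝ (Fin m) →L[ℝ] EuclideanSpace ℝ (Fin m) →L[ℝ] ℝ) →L[ℝ] ℝ :=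
  ∑ i, (ContinuousLinearMap.apply ℝ ℝ (EuclideanSpace.single i 1)).comp
    (ContinuousLinearMap.apply ℝ _ (EuclideanSpace.single i 1))

theorem laplacian_eq_hessianTrace {g : EuclideanSpace ℝ (Fin m) → ℝ}
    {A : EuclideanSpace ℝ (Fin m) →L[ℝ] EuclideanSpace ℝ (Fin m) →L[ℝ] ℝ}
    {x : EuclideanSpace ℝ (Fin m)} (h : HasFDerivAt (fderiv ℝ g) A x) :
    laplacian m g x = hessianTrace m A := by
  simp only [laplacian, hessianTrace, FunLike.coe_sum, Finset.sum_apply]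
  refine Finset.sum_congr rfl fun i _ => ?_
  rw [(h.clm_apply (hasFDerivAt_const (EuclideanSpace.single i 1) x)).fderiv]
  simp

variable {u : EuclideanSpace ℝ (Fin m) → ℝ} {Ω : Set (EuclideanSpace ℝ (Fin m))}

theorem ContDiffOn.hasFDerivAt_fderiv (hu : ContDiffOn ℝ 2 u Ω) (hΩ : IsOpen Ω) {w}
    (hw : w ∈ Ω) : HasFDerivAt (fderiv ℝ u) (fderiv ℝ (fderiv ℝ u) w) w :=
  (((hu.fderiv_of_isOpen hΩ (by norm_num)).differentiableOn one_ne_zero).differentiableAt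
    (hΩ.mem_nhds hw)).hasFDerivAt

theorem ContDiffOn.continuousOn_laplacian (hu : ContDiffOn ℝ 2 u Ω) (hΩ : IsOpen Ω) :
    ContinuousOn (laplacian m u) Ω :=
  ((hessianTrace m).continuous.comp_continuousOn
    ((hu.fderiv_of_isOpen hΩ (by norm_num)).continuousOn_fderiv_of_isOpen hΩ le_rfl)).congr
    fun _ hw => laplacian_eq_hessianTrace (hu.hasFDerivAt_fderiv hΩ hw)

variable [MeasurableSpace (EuclideanSpace ℝ (Fin m))] [BorelSpace (EuclideanSpace ℝ (Fin m))]
  {μ : Measure (EuclideanSpace ℝ (Fin m))} {K : Set (EuclideanSpace ℝ (Fin m))} {r : ℝ}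
  {x : EuclideanSpace ℝ (Fin m)}

theorem laplacian_setAverage_comp_add_smul (hu : ContDiffOn ℝ 2 u Ω) (hΩ : IsOpen Ω)
    (hK : IsCompact K) (hμK : μ K ≠ ∞) (hx : ∀ y ∈ K, x + r • y ∈ Ω) :
    laplacian m (fun z => ⨍ y in K, u (z + r • y) ∂μ) x =
      ⨍ y in K, laplacian m u (x + r • y) ∂μ := by
  have hu' : ∀ w ∈ Ω, HasFDerivAt u (fderiv ℝ u w) w := fun w hw =>
    ((hu.differentiableOn two_ne_zero).differentiableAt (hΩ.mem_nhds hw)).hasFDerivAt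
  have hu'c := hu.continuousOn_fderiv_of_isOpen hΩ one_le_two
  have hu''c := (hu.fderiv_of_isOpen hΩ (by norm_num)).continuousOn_fderiv_of_isOpen hΩ le_rfl
  have hD : fderiv ℝ (fun z => ⨍ y in K, u (z + r • y) ∂μ) =ᶠ[𝓝 x]
      fun z => ⨍ y in K, fderiv ℝ u (z + r • y) ∂μ :=
    (hK.eventually_nhds_forall_add_smul_mem hΩ hx).mono fun z hz =>
      (hasFDerivAt_setAverage_comp_add_smul hK hμK hΩ hu' hu'c hz).fderiv
  have hD2 := (hasFDerivAt_setAverage_comp_add_smul hK hμK hΩ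
    (fun w hw => hu.hasFDerivAt_fderiv hΩ hw) hu''c hx).congr_of_eventuallyEq hD
  rw [laplacian_eq_hessianTrace hD2, setAverage_eq, setAverage_eq, map_smul,
    ← (hessianTrace m).integral_comp_comm (hu''c.integrableOn_comp_add_smul hK hμK hx)]
  congr 1
  exact setIntegral_congr_fun hK.measurableSet fun y hy =>
    (laplacian_eq_hessianTrace (hu.hasFDerivAt_fderiv hΩ (hx y hy))).symm

end Laplacian

section SphereMean

variable {n : ℕ} {Ω : Set (EuclideanSpace ℝ (Fin (n + 1)))} {x : EuclideanSpace ℝ (Fin (n + 1))}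

theorem sphereMean_succ (u : EuclideanSpace ℝ (Fin (n + 1)) → ℝ)
    (x : EuclideanSpace ℝ (Fin (n + 1))) (r : ℝ) :
    sphereMean (n + 1) u x r = ⨍ y in sphere (0 : EuclideanSpace ℝ (Fin (n + 1))) 1,
      u (x + r • y) ∂μH[n] := by
  simp [sphereMean]

theorem laplacian_sphereMean {u : EuclideanSpace ℝ (Fin (n + 1)) → ℝ} (hu : ContDiffOn ℝ 2 u Ω)
    (hΩ : IsOpen Ω) {r : ℝ} (hx : closedBall x |r| ⊆ Ω) :
    laplacian (n + 1) (fun z => sphereMean (n + 1) u z r) x =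
      sphereMean (n + 1) (laplacian (n + 1) u) x r := by
  simp only [sphereMean_succ]
  refine laplacian_setAverage_comp_add_smul hu hΩ (isCompact_sphere 0 1)
    (hausdorffMeasure_sphere_lt_top n).ne fun y hy => hx ?_
  simp [norm_smul, mem_sphere_zero_iff_norm.1 hy]

theorem tendsto_sphereMean {g : EuclideanSpace ℝ (Fin (n + 1)) → ℝ} (hg : ContinuousOn g Ω)
    (hΩ : IsOpen Ω) (hx : x ∈ Ω) : Tendsto (sphereMean (n + 1) g x) (𝓝 0) (𝓝 (g x)) := by
  simp only [funext (sphereMean_succ g x)]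
  exact tendsto_setAverage_comp_add_smul hg hΩ hx (isCompact_sphere 0 1)
    (hausdorffMeasure_sphere_pos n).ne' (hausdorffMeasure_sphere_lt_top n).ne

end SphereMean

theorem stmt_2_general (m : ℕ) (D : Set (EuclideanSpace ℝ (Fin m)))
    (hD_open : IsOpen D)
    (u : EuclideanSpace ℝ (Fin m) → ℝ)
    (hu_C2 : ContDiffOn ℝ 2 u D)
    (rstar : ℝ) (hrstar : 0 < rstar)
    (hmeans : ∀ r ∈ Set.Ioo 0 rstar,
      ContDiffOn ℝ 2 (fun x => sphereMean m u x r) {x ∈ D | closedBall x r ⊆ D} ∧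
        ∀ x ∈ {x ∈ D | closedBall x r ⊆ D},
          laplacian m (fun x => sphereMean m u x r) x = 0) :
    ∀ x ∈ D, laplacian m u x = 0 := by
  intro x hx
  rcases m with _ | n
  · simp [laplacian]
  obtain ⟨ρ, hρ, hρD⟩ := nhds_basis_closedBall.mem_iff.1 (hD_open.mem_nhds hx)
  have hmean_zero : ∀ r ∈ Set.Ioo 0 (min ρ rstar),
      sphereMean (n + 1) (laplacian (n + 1) u) x r = 0 := by
    rintro r ⟨hr₀, hr⟩
    have hxr : closedBall x r ⊆ D :=
      (closedBall_subset_closedBall (hr.le.trans (min_le_left _ _))).trans hρD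
    rw [← laplacian_sphereMean hu_C2 hD_open (by rwa [abs_of_pos hr₀])]
    exact (hmeans r ⟨hr₀, hr.trans_le (min_le_right _ _)⟩).2 x ⟨hx, hxr⟩
  refine tendsto_nhds_unique ((tendsto_sphereMean (hu_C2.continuousOn_laplacian hD_open)
    hD_open hx).mono_left (nhdsWithin_le_nhds (s := Set.Ioi 0))) (tendsto_const_nhds.congr' ?_)
  exact eventually_of_mem (Ioo_mem_nhdsGT (lt_min hρ hrstar)) fun r hr => (hmean_zero r hr).symm

/-- Main theorem: if all spherical means `M(·, r, u)`, `r ∈ (0, r*)`, of a function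
`u ∈ C⁰(closure D) ∩ C²(D)` are harmonic in `D_r`, then `u` is harmonic in `D`. -/
theorem stmt_2 (m : ℕ) (hm : 2 ≤ m) (D : Set (EuclideanSpace ℝ (Fin m)))
    (hD_open : IsOpen D) (hD_conn : IsConnected D)
    (hD_bdd : Bornology.IsBounded D)
    (u : EuclideanSpace ℝ (Fin m) → ℝ)
    (hu_cont : ContinuousOn u (closure D))
    (hu_C2 : ContDiffOn ℝ 2 u D)
    (rstar : ℝ) (hrstar : 0 < rstar)
    (hDrstar : {x ∈ D | closedBall x rstar ⊆ D}.Nonempty)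
    (hmeans : ∀ r ∈ Set.Ioo 0 rstar,
      ContDiffOn ℝ 2 (fun x => sphereMean m u x r) {x ∈ D | closedBall x r ⊆ D} ∧
        ∀ x ∈ {x ∈ D | closedBall x r ⊆ D},
          laplacian m (fun x => sphereMean m u x r) x = 0) :
    ∀ x ∈ D, laplacian m u x = 0 :=
  stmt_2_general m D hD_open u hu_C2 rstar hrstar hmeans
end

section
/- Let D be a domain in ℝ³ and let u ∈ C²(D) satisfy ∇²u − μ²u = 0 in D for some μ ≠ 0. If for r > 0 the set D_r = {x ∈ D : the closure of B_r(x) is contained in D} is nonempty, then the spherical mean M(·, r, u) satisfies ∇²M(·, r, u) − μ²M(·, r, u) = 0 in D_r, with the same coefficient μ² as for u. -/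
open MeasureTheory Metric

/-!
Differentiating twice under the integral sign, the Laplacian commutes with averaging the
translates `y ↦ u (x + r • y)` over a finite measure carried by the unit ball, as long as
`closedBall x r` stays inside the domain of `u`. Averaging `∇²u = μ² u` over the unit sphere
then gives `∇²M(·, r, u) = μ² M(·, r, u)`.
-/

open Filter Topology

section TranslateAverage

lemma closedBall_subset_closedBall_add {X : Type*} [PseudoMetricSpace X] {x x' : X} {r ε : ℝ}
    (hx' : x' ∈ ball x ε) : closedBall x' r ⊆ closedBall x (r + ε) :=
  closedBall_subset_closedBall' (by rw [mem_ball] at hx'; linarith)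

variable {E F : Type*} [NormedAddCommGroup E] [NormedSpace ℝ E] {D : Set E} {r : ℝ} {x : E}

lemma add_smul_mem_closedBall (hr : 0 ≤ r) (x : E) {y : E} (hy : y ∈ closedBall (0 : E) 1) :
    x + r • y ∈ closedBall x r := by
  rw [mem_closedBall_zero_iff] at hy
  rw [mem_closedBall, dist_self_add_left, norm_smul, Real.norm_of_nonneg hr]
  exact mul_le_of_le_one_right hr hy

variable [ProperSpace E]

lemma IsOpen.exists_pos_closedBall_add_subset (hD : IsOpen D) (hr : 0 ≤ r)
    (hx : closedBall x r ⊆ D) : ∃ ε > 0, closedBall x (r + ε) ⊆ D := by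
  obtain ⟨ε, hε, hsub⟩ := (isCompact_closedBall x r).exists_cthickening_subset_open hD hx
  rw [cthickening_closedBall hε.le hr, add_comm] at hsub
  exact ⟨ε, hε, hsub⟩

lemma IsOpen.eventually_closedBall_subset (hD : IsOpen D) (hr : 0 ≤ r) (hx : closedBall x r ⊆ D) :
    ∀ᶠ x' in 𝓝 x, closedBall x' r ⊆ D := by
  obtain ⟨ε, hε, hsub⟩ := hD.exists_pos_closedBall_add_subset hr hx
  filter_upwards [ball_mem_nhds x hε] with x' hx'
  exact (closedBall_subset_closedBall_add hx').trans hsub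

variable [MeasurableSpace E] [BorelSpace E] [NormedAddCommGroup F] {ν : Measure E}
  [IsFiniteMeasure ν]

lemma integrable_comp_add_smul (hν : ∀ᵐ y ∂ν, y ∈ closedBall (0 : E) 1) {g : E → F}
    (hg : ContinuousOn g D) (hr : 0 ≤ r) (hx : closedBall x r ⊆ D) :
    Integrable (fun y => g (x + r • y)) ν := by
  have hcont : ContinuousOn (fun y => g (x + r • y)) (closedBall (0 : E) 1) :=
    hg.comp (by fun_prop) fun y hy => hx (add_smul_mem_closedBall hr x hy)
  have := hcont.integrableOn_compact (μ := ν) (isCompact_closedBall 0 1)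
  rwa [IntegrableOn, Measure.restrict_eq_self_of_ae_mem hν] at this

variable [NormedSpace ℝ F]

lemma hasFDerivAt_integral_comp_add_smul (hν : ∀ᵐ y ∂ν, y ∈ closedBall (0 : E) 1)
    {f : E → F} (hD : IsOpen D) (hf : ContDiffOn ℝ 1 f D) (hr : 0 ≤ r)
    (hx : closedBall x r ⊆ D) :
    HasFDerivAt (fun x => ∫ y, f (x + r • y) ∂ν) (∫ y, fderiv ℝ f (x + r • y) ∂ν) x := by
  obtain ⟨ε, hε, hsub⟩ := hD.exists_pos_closedBall_add_subset hr hx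
  have hmem : ∀ x' ∈ ball x ε, ∀ y ∈ closedBall (0 : E) 1, x' + r • y ∈ D := fun x' hx' y hy =>
    hsub (closedBall_subset_closedBall_add hx' (add_smul_mem_closedBall hr x' hy))
  have hf' : ContinuousOn (fderiv ℝ f) D := hf.continuousOn_fderiv_of_isOpen hD le_rfl
  -- the derivatives are dominated by their maximum on the compact set `closedBall x (r + ε)`
  obtain ⟨C, hC⟩ :=
    (isCompact_closedBall x (r + ε)).exists_bound_of_continuousOn (hf'.mono hsub)
  refine hasFDerivAt_integral_of_dominated_of_fderiv_le
    (F := fun x' y => f (x' + r • y)) (F' := fun x' y => fderiv ℝ f (x' + r • y))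
    (bound := fun _ => C)
    (ball_mem_nhds x hε) ?_ (integrable_comp_add_smul hν hf.continuousOn hr hx)
    (integrable_comp_add_smul hν hf' hr hx).aestronglyMeasurable ?_ (integrable_const C) ?_
  · filter_upwards [hD.eventually_closedBall_subset hr hx] with x' hx'
    exact (integrable_comp_add_smul hν hf.continuousOn hr hx').aestronglyMeasurable
  · filter_upwards [hν] with y hy x' hx'
    exact hC _ (closedBall_subset_closedBall_add hx' (add_smul_mem_closedBall hr x' hy))
  · filter_upwards [hν] with y hy x' hx'
    have hdiff := (hf.differentiableOn one_ne_zero).differentiableAt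
      (hD.mem_nhds (hmem x' hx' y hy))
    exact hdiff.hasFDerivAt.comp x' ((hasFDerivAt_id x').add_const (r • y))

lemma fderiv_integral_comp_add_smul_apply (hν : ∀ᵐ y ∂ν, y ∈ closedBall (0 : E) 1)
    {f : E → F} (hD : IsOpen D) (hf : ContDiffOn ℝ 1 f D) (hr : 0 ≤ r)
    (hx : closedBall x r ⊆ D) (v : E) :
    fderiv ℝ (fun x => ∫ y, f (x + r • y) ∂ν) x v = ∫ y, fderiv ℝ f (x + r • y) v ∂ν := by
  rw [(hasFDerivAt_integral_comp_add_smul hν hD hf hr hx).fderiv]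
  exact ContinuousLinearMap.integral_apply
    (integrable_comp_add_smul hν (hf.continuousOn_fderiv_of_isOpen hD le_rfl) hr hx) v

end TranslateAverage

lemma laplacian_integral_comp_add_smul {m : ℕ} {ν : Measure (EuclideanSpace ℝ (Fin m))}
    [IsFiniteMeasure ν] (hν : ∀ᵐ y ∂ν, y ∈ closedBall (0 : EuclideanSpace ℝ (Fin m)) 1)
    {D : Set (EuclideanSpace ℝ (Fin m))} {u : EuclideanSpace ℝ (Fin m) → ℝ} (hD : IsOpen D)
    (hu : ContDiffOn ℝ 2 u D) {r : ℝ} (hr : 0 ≤ r) {x : EuclideanSpace ℝ (Fin m)}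
    (hx : closedBall x r ⊆ D) :
    laplacian m (fun x => ∫ y, u (x + r • y) ∂ν) x = ∫ y, laplacian m u (x + r • y) ∂ν := by
  have hu₁ : ContDiffOn ℝ 1 u D := hu.of_le (by norm_num)
  have hpartial : ∀ v, ContDiffOn ℝ 1 (fun z => fderiv ℝ u z v) D := fun v =>
    (hu.fderiv_of_isOpen hD (by norm_num)).clm_apply contDiffOn_const
  unfold laplacian
  rw [integral_finsetSum]
  · refine Finset.sum_congr rfl fun i _ => ?_
    set e := EuclideanSpace.single i (1 : ℝ)
    have hfirst : (fun x' => fderiv ℝ (fun x => ∫ y, u (x + r • y) ∂ν) x' e)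
        =ᶠ[𝓝 x] fun x' => ∫ y, fderiv ℝ u (x' + r • y) e ∂ν := by
      filter_upwards [hD.eventually_closedBall_subset hr hx] with x' hx'
      exact fderiv_integral_comp_add_smul_apply hν hD hu₁ hr hx' e
    rw [hfirst.fderiv_eq]
    exact fderiv_integral_comp_add_smul_apply hν hD (hpartial e) hr hx e
  · intro i _
    exact integrable_comp_add_smul hν
      (((hpartial _).continuousOn_fderiv_of_isOpen hD le_rfl).clm_apply continuousOn_const) hr hx

noncomputable def normalizedSphereMeasure (m : ℕ) : Measure (EuclideanSpace ℝ (Fin m)) :=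
  (μH[(m : ℝ) - 1].restrict (sphere (0 : EuclideanSpace ℝ (Fin m)) 1) Set.univ)⁻¹ •
    μH[(m : ℝ) - 1].restrict (sphere 0 1)

instance (m : ℕ) : IsFiniteMeasure (normalizedSphereMeasure m) :=
  IsFiniteMeasure.average

lemma sphereMean_eq_integral (m : ℕ) (u : EuclideanSpace ℝ (Fin m) → ℝ)
    (x : EuclideanSpace ℝ (Fin m)) (r : ℝ) :
    sphereMean m u x r = ∫ y, u (x + r • y) ∂normalizedSphereMeasure m :=
  average_eq' _ _

lemma ae_normalizedSphereMeasure_mem_closedBall (m : ℕ) :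
    ∀ᵐ y ∂normalizedSphereMeasure m, y ∈ closedBall (0 : EuclideanSpace ℝ (Fin m)) 1 :=
  Measure.ae_smul_measure ((ae_restrict_mem isClosed_sphere.measurableSet).mono
    fun _ hy => sphere_subset_closedBall hy) _

theorem stmt_12_general (D : Set (EuclideanSpace ℝ (Fin 3)))
    (hD_open : IsOpen D)
    (u : EuclideanSpace ℝ (Fin 3) → ℝ)
    (hu_C2 : ContDiffOn ℝ 2 u D)
    (μ : ℝ)
    (hu_pan : ∀ x ∈ D, laplacian 3 u x - μ ^ 2 * u x = 0)
    (r : ℝ) (hr : 0 < r) :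
    ∀ x ∈ {x ∈ D | closedBall x r ⊆ D},
      laplacian 3 (fun x => sphereMean 3 u x r) x - μ ^ 2 * sphereMean 3 u x r = 0 := by
  rintro x ⟨-, hx⟩
  have hν := ae_normalizedSphereMeasure_mem_closedBall 3
  have hpan : ∀ᵐ y ∂normalizedSphereMeasure 3,
      laplacian 3 u (x + r • y) = μ ^ 2 * u (x + r • y) := by
    filter_upwards [hν] with y hy
    exact sub_eq_zero.mp (hu_pan _ (hx (add_smul_mem_closedBall hr.le x hy)))
  simp only [sphereMean_eq_integral]
  rw [laplacian_integral_comp_add_smul hν hD_open hu_C2 hr.le hx, integral_congr_ae hpan,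
    integral_const_mul, sub_self]

/-- If `u` is panharmonic in a domain `D ⊆ ℝ³` and `D_r` is nonempty, then the
spherical mean `M(·, r, u)` is panharmonic in `D_r` with the same coefficient. -/
theorem stmt_12 (D : Set (EuclideanSpace ℝ (Fin 3)))
    (hD_open : IsOpen D) (hD_conn : IsConnected D)
    (u : EuclideanSpace ℝ (Fin 3) → ℝ)
    (hu_C2 : ContDiffOn ℝ 2 u D)
    (μ : ℝ) (hμ : μ ≠ 0)
    (hu_pan : ∀ x ∈ D, laplacian 3 u x - μ ^ 2 * u x = 0)
    (r : ℝ) (hr : 0 < r)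
    (hDr : {x ∈ D | closedBall x r ⊆ D}.Nonempty) :
    ∀ x ∈ {x ∈ D | closedBall x r ⊆ D},
      laplacian 3 (fun x => sphereMean 3 u x r) x - μ ^ 2 * sphereMean 3 u x r = 0 :=
  stmt_12_general D hD_open u hu_C2 μ hu_pan r hr
end
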